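/- Fix τ ∈ (0,1). For every measurable π₁ : 𝒳₁ → {−1,1}, the set {y : pr^{(Γ(·,y), π₂*)}(Y ≤ y) ≥ τ} is contained in {y : pr^{(π₁, π₂*)}(Y ≤ y) ≥ τ}, and consequently q^{(π₁, π₂*)}(τ) ≤ y*_τ. -/
import Mathlib


open MeasureTheory ProbabilityTheory Filter Set

noncomputable section

/-- sign function: `1` if `0 ≤ x`, `−1` otherwise. -/
def sgn (x : ℝ) : ℝ := if 0 ≤ x then 1 else -1

/-- `pr^π(Y ≤ y)`, the CDF of the outcome induced by the regime `(π₁, π₂)`: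
`∫∫ F_ε(y − m(h₂) − π₂(h₂) c(h₂)) κ((h₁, π₁(h₁)), dh₂) μ(dh₁)`. -/
def prPi {X1 X2 : Type*} [MeasurableSpace X1] [MeasurableSpace X2]
    (μ : Measure X1) (κ : Kernel (X1 × ℝ) X2) (m c : X2 → ℝ) (Feps : ℝ → ℝ)
    (π₁ : X1 → ℝ) (π₂ : X2 → ℝ) (y : ℝ) : ℝ :=
  ∫ h₁, (∫ h₂, Feps (y - m h₂ - π₂ h₂ * c h₂) ∂(κ (h₁, π₁ h₁))) ∂μ

/-- `I(y, F, G) = ∫ F(y − u − |v|) dG(u,v)`. -/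
def Ifun (y : ℝ) (F : ℝ → ℝ) (G : Measure (ℝ × ℝ)) : ℝ :=
  ∫ p, F (y - p.1 - |p.2|) ∂G

/-- `G(·,· | h₁, a₁)`: the pushforward of `κ((h₁,a₁),·)` under `h₂ ↦ (m h₂, c h₂)`. -/
def Gdist {X1 X2 : Type*} [MeasurableSpace X1] [MeasurableSpace X2]
    (κ : Kernel (X1 × ℝ) X2) (m c : X2 → ℝ) (h₁ : X1) (a₁ : ℝ) : Measure (ℝ × ℝ) :=
  (κ (h₁, a₁)).map (fun h₂ => (m h₂, c h₂))

/-- `d(h₁, y) = I(y, F_ε, G(·,·|h₁,−1)) − I(y, F_ε, G(·,·|h₁,1))`. -/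
def dfun {X1 X2 : Type*} [MeasurableSpace X1] [MeasurableSpace X2]
    (κ : Kernel (X1 × ℝ) X2) (m c : X2 → ℝ) (Feps : ℝ → ℝ) (h₁ : X1) (y : ℝ) : ℝ :=
  Ifun y Feps (Gdist κ m c h₁ (-1)) - Ifun y Feps (Gdist κ m c h₁ 1)

/-- `Γ(h₁, y) = sgn(d(h₁, y))`. -/
def Gam {X1 X2 : Type*} [MeasurableSpace X1] [MeasurableSpace X2]
    (κ : Kernel (X1 × ℝ) X2) (m c : X2 → ℝ) (Feps : ℝ → ℝ) (h₁ : X1) (y : ℝ) : ℝ :=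
  sgn (dfun κ m c Feps h₁ y)

/-- `q^π(τ) = inf{y : pr^π(Y ≤ y) ≥ τ}`. -/
def quant {X1 X2 : Type*} [MeasurableSpace X1] [MeasurableSpace X2]
    (μ : Measure X1) (κ : Kernel (X1 × ℝ) X2) (m c : X2 → ℝ) (Feps : ℝ → ℝ)
    (τ : ℝ) (π₁ : X1 → ℝ) (π₂ : X2 → ℝ) : ℝ :=
  sInf {y : ℝ | τ ≤ prPi μ κ m c Feps π₁ π₂ y}

/-- `y*_τ = inf{y : pr^{(Γ(·,y), π₂*)}(Y ≤ y) ≥ τ}` where `π₂*(h₂) = sgn(c(h₂))`. -/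
def ystar {X1 X2 : Type*} [MeasurableSpace X1] [MeasurableSpace X2]
    (μ : Measure X1) (κ : Kernel (X1 × ℝ) X2) (m c : X2 → ℝ) (Feps : ℝ → ℝ)
    (τ : ℝ) : ℝ :=
  sInf {y : ℝ |
    τ ≤ prPi μ κ m c Feps (fun h₁ => Gam κ m c Feps h₁ y) (fun h₂ => sgn (c h₂)) y}

/-- `f(y) = q^{(Γ(·,y), π₂*)}(τ)`. -/
def fQIQ {X1 X2 : Type*} [MeasurableSpace X1] [MeasurableSpace X2]
    (μ : Measure X1) (κ : Kernel (X1 × ℝ) X2) (m c : X2 → ℝ) (Feps : ℝ → ℝ)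
    (τ : ℝ) (y : ℝ) : ℝ :=
  quant μ κ m c Feps τ (fun h₁ => Gam κ m c Feps h₁ y) (fun h₂ => sgn (c h₂))

lemma sgn_mul_self (x : ℝ) : sgn x * x = |x| := by
  unfold sgn
  split
  · rw [one_mul, abs_of_nonneg ‹_›]
  · rw [neg_one_mul, abs_of_neg (lt_of_not_ge ‹_›)]

/-- fix `τ ∈ (0,1)`. For every measurable `π₁ : 𝒳₁ → {−1,1}`,
`{y : pr^{(Γ(·,y), π₂*)}(Y ≤ y) ≥ τ} ⊆ {y : pr^{(π₁, π₂*)}(Y ≤ y) ≥ τ}`, and consequently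
`q^{(π₁, π₂*)}(τ) ≤ y*_τ`. -/
theorem stmt6
    {X1 X2 : Type*} [MeasurableSpace X1] [MeasurableSpace X2]
    [StandardBorelSpace X1] [StandardBorelSpace X2]
    (μ : Measure X1) [IsProbabilityMeasure μ]
    (κ : Kernel (X1 × ℝ) X2) [IsMarkovKernel κ]
    (m c : X2 → ℝ) (hm : Measurable m) (hc : Measurable c)
    (Feps : ℝ → ℝ) (hF_mono : Monotone Feps)
    (hF_rc : ∀ x : ℝ, ContinuousWithinAt Feps (Ici x) x)
    (hF_bot : Tendsto Feps atBot (nhds 0)) (hF_top : Tendsto Feps atTop (nhds 1))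
    (hF_mem : ∀ x : ℝ, Feps x ∈ Icc (0:ℝ) 1)
    (τ : ℝ) (hτ : τ ∈ Ioo (0:ℝ) 1)
    (π₁ : X1 → ℝ) (hπ₁ : Measurable π₁) (hπ₁v : ∀ h₁, π₁ h₁ = 1 ∨ π₁ h₁ = -1) :
    {y : ℝ | τ ≤ prPi μ κ m c Feps (fun h₁ => Gam κ m c Feps h₁ y) (fun h₂ => sgn (c h₂)) y}
      ⊆ {y : ℝ | τ ≤ prPi μ κ m c Feps π₁ (fun h₂ => sgn (c h₂)) y} ∧
    quant μ κ m c Feps τ π₁ (fun h₂ => sgn (c h₂)) ≤ ystar μ κ m c Feps τ := by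
  have Fm : Measurable Feps := hF_mono.measurable
  set g : ℝ → X2 → ℝ := fun y h₂ => Feps (y - m h₂ - |c h₂|) with hgdef
  have gmeas : ∀ y, Measurable (g y) := fun y =>
    Fm.comp ((measurable_const.sub hm).sub hc.abs)
  have gbd : ∀ y h₂, ‖g y h₂‖ ≤ 1 := by
    intro y h₂
    rw [Real.norm_eq_abs, abs_le]
    exact ⟨by linarith [(hF_mem (y - m h₂ - |c h₂|)).1], (hF_mem _).2⟩
  have gint : ∀ y (p : X1 × ℝ), Integrable (g y) (κ p) := fun y p =>
    (integrable_const (1:ℝ)).mono' (gmeas y).aestronglyMeasurable (ae_of_all _ (gbd y))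
  set J : ℝ → X1 × ℝ → ℝ := fun y p => ∫ h₂, g y h₂ ∂κ p with hJdef
  have Jmeas : ∀ y, Measurable (J y) := by
    intro y
    have h : StronglyMeasurable (Function.uncurry fun (_ : X1 × ℝ) h₂ => g y h₂) :=
      ((gmeas y).comp measurable_snd).stronglyMeasurable
    exact h.integral_kernel_prod_right.measurable
  have Jnn : ∀ y p, 0 ≤ J y p := fun y p => integral_nonneg fun h₂ => (hF_mem _).1
  have Jle1 : ∀ y p, J y p ≤ 1 := by
    intro y p
    calc J y p ≤ ∫ _, (1:ℝ) ∂κ p :=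
          integral_mono (gint y p) (integrable_const 1) fun h₂ => (hF_mem _).2
      _ = 1 := by simp
  -- prPi with π₂* rewritten via J
  have prPi_eq : ∀ (π : X1 → ℝ) (y : ℝ),
      prPi μ κ m c Feps π (fun h₂ => sgn (c h₂)) y = ∫ h₁, J y (h₁, π h₁) ∂μ := by
    intro π y
    simp only [prPi, hJdef, hgdef, sgn_mul_self]
  -- Ifun equals J
  have Ifun_eq : ∀ (y : ℝ) (h₁ : X1) (a : ℝ), Ifun y Feps (Gdist κ m c h₁ a) = J y (h₁, a) := by
    intro y h₁ a
    have hmc : Measurable fun h₂ : X2 => (m h₂, c h₂) := hm.prodMk hc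
    have hf : Measurable fun p : ℝ × ℝ => Feps (y - p.1 - |p.2|) :=
      Fm.comp ((measurable_const.sub measurable_fst).sub measurable_snd.abs)
    simp only [Ifun, Gdist, hJdef, hgdef]
    rw [integral_map hmc.aemeasurable hf.aestronglyMeasurable]
  -- Gam picks the minimum
  have hGam : ∀ (y : ℝ) (h₁ : X1),
      J y (h₁, Gam κ m c Feps h₁ y) = min (J y (h₁, 1)) (J y (h₁, -1)) := by
    intro y h₁
    have hd : dfun κ m c Feps h₁ y = J y (h₁, -1) - J y (h₁, 1) := by
      rw [dfun, Ifun_eq, Ifun_eq]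
    unfold Gam sgn
    rw [hd]
    split
    · rw [min_eq_left (by linarith)]
    · rw [min_eq_right (by push_neg at *; linarith)]
  have key : ∀ (y : ℝ) (h₁ : X1),
      J y (h₁, Gam κ m c Feps h₁ y) ≤ J y (h₁, π₁ h₁) := by
    intro y h₁
    rw [hGam]
    rcases hπ₁v h₁ with h | h <;> rw [h]
    · exact min_le_left _ _
    · exact min_le_right _ _
  have intR : ∀ (π : X1 → ℝ), Measurable π → ∀ y : ℝ,
      Integrable (fun h₁ => J y (h₁, π h₁)) μ := by
    intro π hπ y
    refine (integrable_const (1:ℝ)).mono'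
      (((Jmeas y).comp (measurable_id.prodMk hπ)).aestronglyMeasurable)
      (ae_of_all _ fun h₁ => ?_)
    rw [Real.norm_eq_abs, abs_le]
    exact ⟨by linarith [Jnn y (h₁, π h₁)], Jle1 _ _⟩
  have hsubset : {y : ℝ | τ ≤ prPi μ κ m c Feps (fun h₁ => Gam κ m c Feps h₁ y)
      (fun h₂ => sgn (c h₂)) y} ⊆
      {y : ℝ | τ ≤ prPi μ κ m c Feps π₁ (fun h₂ => sgn (c h₂)) y} := by
    intro y hy
    simp only [mem_setOf_eq] at hy ⊢
    rw [prPi_eq] at hy ⊢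
    refine hy.trans (integral_mono_of_nonneg (ae_of_all _ fun h₁ => Jnn y _)
      (intR π₁ hπ₁ y) (ae_of_all _ fun h₁ => key y h₁))
  refine ⟨hsubset, ?_⟩
  -- limits of J
  have Jtop : ∀ p : X1 × ℝ, Tendsto (fun y => J y p) atTop (nhds 1) := by
    intro p
    have h1 : (1:ℝ) = ∫ _, (1:ℝ) ∂κ p := by simp
    rw [h1]
    refine tendsto_integral_filter_of_dominated_convergence (fun _ => (1:ℝ))
      (Eventually.of_forall fun y => (gmeas y).aestronglyMeasurable)
      (Eventually.of_forall fun y => ae_of_all _ (gbd y)) (integrable_const 1)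
      (ae_of_all _ fun h₂ => ?_)
    have ht : Tendsto (fun y : ℝ => y - m h₂ - |c h₂|) atTop atTop := by
      simp only [sub_eq_add_neg]
      exact tendsto_atTop_add_const_right _ _ (tendsto_atTop_add_const_right _ _ tendsto_id)
    exact hF_top.comp ht
  have Jbot : ∀ p : X1 × ℝ, Tendsto (fun y => J y p) atBot (nhds 0) := by
    intro p
    have h0 : (0:ℝ) = ∫ (_ : X2), (0:ℝ) ∂κ p := by simp
    rw [h0]
    refine tendsto_integral_filter_of_dominated_convergence (fun _ => (1:ℝ))
      (Eventually.of_forall fun y => (gmeas y).aestronglyMeasurable)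
      (Eventually.of_forall fun y => ae_of_all _ (gbd y)) (integrable_const 1)
      (ae_of_all _ fun h₂ => ?_)
    have ht : Tendsto (fun y : ℝ => y - m h₂ - |c h₂|) atBot atBot := by
      simp only [sub_eq_add_neg]
      exact tendsto_atBot_add_const_right _ _ (tendsto_atBot_add_const_right _ _ tendsto_id)
    exact hF_bot.comp ht
  -- the set defining ystar is nonempty
  have prGam_eq : ∀ y : ℝ,
      prPi μ κ m c Feps (fun h₁ => Gam κ m c Feps h₁ y) (fun h₂ => sgn (c h₂)) y
        = ∫ h₁, min (J y (h₁, 1)) (J y (h₁, -1)) ∂μ := by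
    intro y
    rw [prPi_eq]
    exact integral_congr_ae (ae_of_all _ fun h₁ => hGam y h₁)
  have hA : {y : ℝ | τ ≤ prPi μ κ m c Feps (fun h₁ => Gam κ m c Feps h₁ y)
      (fun h₂ => sgn (c h₂)) y}.Nonempty := by
    have hΦ : Tendsto (fun y => ∫ h₁, min (J y (h₁, 1)) (J y (h₁, -1)) ∂μ) atTop (nhds 1) := by
      have h1 : Tendsto (fun y => ∫ h₁, min (J y (h₁, 1)) (J y (h₁, -1)) ∂μ) atTop
          (nhds (∫ (_ : X1), (1:ℝ) ∂μ)) := by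
        refine tendsto_integral_filter_of_dominated_convergence (fun _ => (1:ℝ))
          (Eventually.of_forall fun y =>
            (((Jmeas y).comp (measurable_id.prodMk measurable_const)).min
              ((Jmeas y).comp (measurable_id.prodMk measurable_const))).aestronglyMeasurable)
          (Eventually.of_forall fun y => ae_of_all _ fun h₁ => ?_) (integrable_const 1)
          (ae_of_all _ fun h₁ => ?_)
        · show ‖min (J y (h₁, 1)) (J y (h₁, -1))‖ ≤ 1
          rw [Real.norm_eq_abs, abs_le]
          constructor
          · have := Jnn y (h₁, 1); have := Jnn y (h₁, -1)
            simp only [le_min_iff]; constructor <;> linarith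
          · exact min_le_of_left_le (Jle1 _ _)
        · have := (Jtop (h₁, 1)).min (Jtop (h₁, -1))
          simpa using this
      simpa using h1
    have hev : ∀ᶠ y in atTop, τ < ∫ h₁, min (J y (h₁, 1)) (J y (h₁, -1)) ∂μ :=
      hΦ.eventually (eventually_gt_nhds hτ.2)
    obtain ⟨y, hy⟩ := hev.exists
    exact ⟨y, by rw [mem_setOf_eq, prGam_eq]; exact hy.le⟩
  have hB : BddBelow {y : ℝ | τ ≤ prPi μ κ m c Feps π₁ (fun h₂ => sgn (c h₂)) y} := by
    have hΨ : Tendsto (fun y => prPi μ κ m c Feps π₁ (fun h₂ => sgn (c h₂)) y)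
        atBot (nhds 0) := by
      simp only [prPi_eq]
      have h0 : Tendsto (fun y => ∫ h₁, J y (h₁, π₁ h₁) ∂μ) atBot
          (nhds (∫ (_ : X1), (0:ℝ) ∂μ)) := by
        refine tendsto_integral_filter_of_dominated_convergence (fun _ => (1:ℝ))
          (Eventually.of_forall fun y =>
            ((Jmeas y).comp (measurable_id.prodMk hπ₁)).aestronglyMeasurable)
          (Eventually.of_forall fun y => ae_of_all _ fun h₁ => ?_) (integrable_const 1)
          (ae_of_all _ fun h₁ => Jbot (h₁, π₁ h₁))
        show ‖J y (h₁, π₁ h₁)‖ ≤ 1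
        rw [Real.norm_eq_abs, abs_le]
        exact ⟨by linarith [Jnn y (h₁, π₁ h₁)], Jle1 _ _⟩
      simpa using h0
    have hev : ∀ᶠ y in atBot, prPi μ κ m c Feps π₁ (fun h₂ => sgn (c h₂)) y < τ :=
      hΨ.eventually (eventually_lt_nhds hτ.1)
    obtain ⟨y₀, hy₀⟩ := eventually_atBot.mp hev
    refine ⟨y₀, fun y hy => ?_⟩
    by_contra hlt
    push_neg at hlt
    exact absurd hy.out (not_le.mpr (hy₀ y hlt.le))
  exact csInf_le_csInf hB hA hsubset
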